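/- If a graded ideal J of K[x₁,…,xₙ,t] has one minimal homogeneous Gröbner basis (w.r.t. ≺_t) that is dh-closed, then every minimal homogeneous Gröbner basis of J is dh-closed. -/
import Mathlib


open MvPolynomial

noncomputable def deh {K : Type*} [CommSemiring K] {n : ℕ}
    (F : MvPolynomial (Option (Fin n)) K) : MvPolynomial (Fin n) K :=
  aeval (fun o => o.elim 1 X) F

noncomputable def hmz {K : Type*} [CommSemiring K] {n : ℕ}
    (f : MvPolynomial (Fin n) K) : MvPolynomial (Option (Fin n)) K :=
  f.support.sum fun d =>
    monomial (Finsupp.mapDomain some d +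
      Finsupp.single (none : Option (Fin n)) (f.totalDegree - d.sum fun _ e => e)) (coeff d f)

def mdeg {σ : Type*} (d : σ →₀ ℕ) : ℕ := d.sum fun _ e => e

def IsLM {K σ : Type*} [CommSemiring K] (lt : (σ →₀ ℕ) → (σ →₀ ℕ) → Prop)
    (f : MvPolynomial σ K) (m : σ →₀ ℕ) : Prop :=
  m ∈ f.support ∧ ∀ m' ∈ f.support, m' ≠ m → lt m' m

def GoodOrder {σ : Type*} (lt : (σ →₀ ℕ) → (σ →₀ ℕ) → Prop) : Prop :=
  (∀ a b, a ≠ b → lt a b ∨ lt b a) ∧ (∀ a b, lt a b → ¬ lt b a) ∧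
    (∀ a b c, lt a b → lt b c → lt a c) ∧
    (∀ a b, mdeg a < mdeg b → lt a b) ∧
    (∀ a b c, lt a b → lt (a + c) (b + c))

noncomputable def xpart {n : ℕ} (M : Option (Fin n) →₀ ℕ) : Fin n →₀ ℕ :=
  Finsupp.equivFunOnFinite.symm fun i => M (some i)

def ltT {n : ℕ} (lt : (Fin n →₀ ℕ) → (Fin n →₀ ℕ) → Prop)
    (M₁ M₂ : Option (Fin n) →₀ ℕ) : Prop :=
  lt (xpart M₁) (xpart M₂) ∨ (xpart M₁ = xpart M₂ ∧ M₁ none < M₂ none)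

def monDvd {σ : Type*} (a b : σ →₀ ℕ) : Prop := ∃ c, b = a + c

def IsGB {K σ : Type*} [CommSemiring K] (lt : (σ →₀ ℕ) → (σ →₀ ℕ) → Prop)
    (G Jset : Set (MvPolynomial σ K)) : Prop :=
  G ⊆ Jset ∧ ∀ f ∈ Jset, f ≠ 0 →
    ∃ g ∈ G, ∃ mf mg, IsLM lt f mf ∧ IsLM lt g mg ∧ monDvd mg mf

noncomputable def HSet {K : Type*} [CommSemiring K] {n : ℕ}
    (I : Ideal (MvPolynomial (Fin n) K)) : Set (MvPolynomial (Option (Fin n)) K) :=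
  {F | ∃ f ∈ I, f ≠ 0 ∧ F = hmz f}

def GradedIdeal {K : Type*} [CommSemiring K] {n : ℕ}
    (J : Ideal (MvPolynomial (Option (Fin n)) K)) : Prop :=
  ∀ F ∈ J, ∀ p : ℕ, homogeneousComponent p F ∈ J

noncomputable def dehHom {K : Type*} [CommSemiring K] {n : ℕ} :
    MvPolynomial (Option (Fin n)) K →+* MvPolynomial (Fin n) K :=
  (aeval (R := K) (fun o : Option (Fin n) => o.elim 1 X)).toRingHom

def NormalMon {K σ : Type*} [CommSemiring K] (lt : (σ →₀ ℕ) → (σ →₀ ℕ) → Prop)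
    (Jset : Set (MvPolynomial σ K)) : Set (σ →₀ ℕ) :=
  {w | ∀ f ∈ Jset, f ≠ 0 → ∀ m, IsLM lt f m → ¬ monDvd m w}

def MinGB {K σ : Type*} [CommSemiring K] (lt : (σ →₀ ℕ) → (σ →₀ ℕ) → Prop)
    (G Jset : Set (MvPolynomial σ K)) : Prop :=
  IsGB lt G Jset ∧ ∀ g ∈ G, ∀ g' ∈ G, g ≠ g' →
    ∀ mg mg', IsLM lt g mg → IsLM lt g' mg' → ¬ monDvd mg mg'

section AuxLemmas
variable {K : Type*} [CommSemiring K] {n : ℕ}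
open MvPolynomial

lemma xpart_apply (M : Option (Fin n) →₀ ℕ) (i : Fin n) : xpart M i = M (some i) := rfl

lemma xpart_mapDomain (d : Fin n →₀ ℕ) : xpart (Finsupp.mapDomain some d) = d := by
  ext i; rw [xpart_apply, Finsupp.mapDomain_apply (Option.some_injective _)]

lemma mapDomain_some_none (d : Fin n →₀ ℕ) : (Finsupp.mapDomain some d) none = 0 := by
  apply Finsupp.mapDomain_notin_range
  simp

lemma decomp (M : Option (Fin n) →₀ ℕ) :
    M = Finsupp.mapDomain some (xpart M) + Finsupp.single none (M none) := by
  ext o; cases o with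
  | none => simp [mapDomain_some_none]
  | some i => simp [Finsupp.mapDomain_apply (Option.some_injective _), xpart_apply]

lemma mdeg_mapDomain (d : Fin n →₀ ℕ) : mdeg (Finsupp.mapDomain some d) = mdeg d := by
  unfold mdeg
  rw [Finsupp.sum_mapDomain_index] <;> simp

lemma mdeg_single (o : Option (Fin n)) (k : ℕ) : mdeg (Finsupp.single o k) = k := by
  simp [mdeg]

lemma mdeg_add {σ : Type*} (a b : σ →₀ ℕ) : mdeg (a + b) = mdeg a + mdeg b := by
  unfold mdeg; rw [Finsupp.sum_add_index' (fun _ => rfl) (fun _ _ _ => rfl)]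

lemma mdeg_decomp (M : Option (Fin n) →₀ ℕ) : mdeg M = mdeg (xpart M) + M none := by
  conv_lhs => rw [decomp M]
  rw [mdeg_add, mdeg_mapDomain, mdeg_single]

lemma deh_monomial (M : Option (Fin n) →₀ ℕ) (c : K) :
    deh (monomial M c) = monomial (xpart M) c := by
  rw [deh, aeval_monomial, monomial_eq]
  congr 1
  conv_lhs => rw [decomp M]
  rw [Finsupp.prod_add_index (by simp) (by intros; rw [pow_add]),
    Finsupp.prod_mapDomain_index_inj (Option.some_injective _),
    Finsupp.prod_single_index (by simp)]
  simp [monomial_eq]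

lemma deh_eq_sum (F : MvPolynomial (Option (Fin n)) K) :
    deh F = ∑ M ∈ F.support, monomial (xpart M) (coeff M F) := by
  conv_lhs => rw [deh, ← F.support_sum_monomial_coeff, map_sum]
  exact Finset.sum_congr rfl fun M _ => deh_monomial M _

lemma homog_mdeg {F : MvPolynomial (Option (Fin n)) K} {p : ℕ}
    (hF : F.IsHomogeneous p) {M : Option (Fin n) →₀ ℕ} (hM : M ∈ F.support) :
    mdeg M = p := by
  have := hF (mem_support_iff.mp hM)
  simpa [mdeg, Finsupp.weight, Finsupp.sum, Finsupp.linearCombination] using this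

lemma xpart_injOn {F : MvPolynomial (Option (Fin n)) K} {p : ℕ}
    (hF : F.IsHomogeneous p) {M₁ M₂ : Option (Fin n) →₀ ℕ}
    (h₁ : M₁ ∈ F.support) (h₂ : M₂ ∈ F.support) (hx : xpart M₁ = xpart M₂) :
    M₁ = M₂ := by
  have e1 := homog_mdeg hF h₁
  have e2 := homog_mdeg hF h₂
  rw [mdeg_decomp] at e1 e2
  rw [hx] at e1
  have hnn : M₁ none = M₂ none := by omega
  rw [decomp M₁, decomp M₂, hx, hnn]

lemma coeff_deh {F : MvPolynomial (Option (Fin n)) K} {p : ℕ}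
    (hF : F.IsHomogeneous p) {M : Option (Fin n) →₀ ℕ} (hM : M ∈ F.support) :
    coeff (xpart M) (deh F) = coeff M F := by
  rw [deh_eq_sum, coeff_sum]
  rw [Finset.sum_eq_single M (fun M' hM' hne => by
      rw [coeff_monomial, if_neg (fun h => hne (xpart_injOn hF hM' hM h))])
    (fun h => absurd hM h)]
  simp [coeff_monomial]

lemma support_deh {F : MvPolynomial (Option (Fin n)) K} {p : ℕ}
    (hF : F.IsHomogeneous p) :
    (deh F).support = F.support.image xpart := by
  ext d
  simp only [mem_support_iff, Finset.mem_image]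
  constructor
  · intro hd
    by_contra hc
    push_neg at hc
    apply hd
    rw [deh_eq_sum, coeff_sum]
    refine Finset.sum_eq_zero fun M hM => ?_
    rw [coeff_monomial, if_neg (fun h => hc M (mem_support_iff.mp hM) h)]
  · rintro ⟨M, hM, rfl⟩
    rw [coeff_deh hF (mem_support_iff.mpr hM)]
    exact hM

lemma totalDegree_deh {F : MvPolynomial (Option (Fin n)) K} {p : ℕ}
    (hF : F.IsHomogeneous p) {M₀ : Option (Fin n) →₀ ℕ} (h₀ : M₀ ∈ F.support)
    (hz : M₀ none = 0) : (deh F).totalDegree = p := by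
  apply le_antisymm
  · rw [totalDegree]
    apply Finset.sup_le
    intro d hd
    rw [support_deh hF] at hd
    obtain ⟨M, hM, rfl⟩ := Finset.mem_image.mp hd
    have := homog_mdeg hF hM
    rw [mdeg_decomp] at this
    show mdeg (xpart M) ≤ p
    omega
  · have h1 : mdeg (xpart M₀) = p := by
      have := homog_mdeg hF h₀; rw [mdeg_decomp] at this; omega
    have h2 : xpart M₀ ∈ (deh F).support := by
      rw [support_deh hF]; exact Finset.mem_image_of_mem _ h₀
    calc p = mdeg (xpart M₀) := h1.symm
      _ ≤ _ := le_totalDegree h2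

lemma lemA {F : MvPolynomial (Option (Fin n)) K} {p : ℕ}
    (hF : F.IsHomogeneous p) {M₀ : Option (Fin n) →₀ ℕ} (h₀ : M₀ ∈ F.support)
    (hz : M₀ none = 0) : hmz (deh F) = F := by
  rw [hmz, totalDegree_deh hF h₀ hz, support_deh hF,
    Finset.sum_image (fun M hM M' hM' h => xpart_injOn hF hM hM' h)]
  conv_rhs => rw [← F.support_sum_monomial_coeff]
  refine Finset.sum_congr rfl fun M hM => ?_
  rw [coeff_deh hF hM]
  congr 1
  have hm := homog_mdeg hF hM; rw [mdeg_decomp] at hm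
  have he : p - (xpart M).sum (fun _ e => e) = M none := by
    show p - mdeg (xpart M) = M none; omega
  rw [he, ← decomp]

lemma xpart_add (a b : Option (Fin n) →₀ ℕ) : xpart (a + b) = xpart a + xpart b := by
  ext i; simp [xpart_apply]

lemma xpart_single_none (k : ℕ) :
    xpart (Finsupp.single (none : Option (Fin n)) k) = 0 := by
  ext i; simp [xpart_apply]

lemma coeff_hmz {f : MvPolynomial (Fin n) K} {d : Fin n →₀ ℕ} (hd : d ∈ f.support) :
    coeff (Finsupp.mapDomain some d +
      Finsupp.single (none : Option (Fin n)) (f.totalDegree - d.sum fun _ e => e)) (hmz f)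
      = coeff d f := by
  have key : ∀ d' : Fin n →₀ ℕ,
      (Finsupp.mapDomain some d' +
        Finsupp.single (none : Option (Fin n)) (f.totalDegree - d'.sum fun _ e => e))
      = (Finsupp.mapDomain some d +
        Finsupp.single (none : Option (Fin n)) (f.totalDegree - d.sum fun _ e => e)) →
      d' = d := by
    intro d' h
    have h2 := congrArg xpart h
    simp only [xpart_add, xpart_single_none, xpart_mapDomain, add_zero] at h2
    exact h2
  rw [hmz, coeff_sum]
  rw [Finset.sum_eq_single d (fun d' hd' hne => by
      rw [coeff_monomial]; exact if_neg fun h => hne (key d' h))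
    (fun h => absurd hd h)]
  rw [coeff_monomial, if_pos rfl]

lemma ltT_asymm {lt : (Fin n →₀ ℕ) → (Fin n →₀ ℕ) → Prop} (hlt : GoodOrder lt) :
    ∀ a b : Option (Fin n) →₀ ℕ, ltT lt a b → ¬ ltT lt b a := by
  rintro a b (h | ⟨he, h⟩) (h' | ⟨he', h'⟩)
  · exact hlt.2.1 _ _ h h'
  · rw [he'] at h; exact hlt.2.1 _ _ h h
  · rw [he] at h'; exact hlt.2.1 _ _ h' h'
  · omega

lemma isLM_unique {σ : Type*} {f : MvPolynomial σ K}
    {lt' : (σ →₀ ℕ) → (σ →₀ ℕ) → Prop} (hasymm : ∀ a b, lt' a b → ¬ lt' b a)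
    {m m' : σ →₀ ℕ} (h : IsLM lt' f m) (h' : IsLM lt' f m') : m = m' := by
  by_contra hne
  exact hasymm _ _ (h'.2 m h.1 hne) (h.2 m' h'.1 fun e => hne e.symm)

lemma monDvd_trans {σ : Type*} {a b c : σ →₀ ℕ} (h1 : monDvd a b) (h2 : monDvd b c) :
    monDvd a c := by
  obtain ⟨u, rfl⟩ := h1; obtain ⟨v, rfl⟩ := h2; exact ⟨u + v, add_assoc _ _ _⟩

lemma monDvd_antisymm {σ : Type*} {a b : σ →₀ ℕ} (h1 : monDvd a b) (h2 : monDvd b a) :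
    a = b := by
  obtain ⟨u, hu⟩ := h1; obtain ⟨v, hv⟩ := h2
  ext o
  have e1 := DFunLike.congr_fun hu o
  have e2 := DFunLike.congr_fun hv o
  simp only [Finsupp.add_apply] at e1 e2
  omega

lemma lemB {lt : (Fin n →₀ ℕ) → (Fin n →₀ ℕ) → Prop} (hlt : GoodOrder lt)
    {g : MvPolynomial (Option (Fin n)) K} {q : ℕ} (hgq : g.IsHomogeneous q)
    (hdh : hmz (deh g) = g) {N : Option (Fin n) →₀ ℕ}
    (hN : IsLM (ltT lt) g N) : N none = 0 := by
  set f : MvPolynomial (Fin n) K := deh g with hf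
  have hg0 : g ≠ 0 := by
    intro h
    rw [h] at hN
    simpa using hN.1
  have hf0 : f ≠ 0 := by
    intro h
    apply hg0
    rw [← hdh, h]
    simp [hmz]
  obtain ⟨d₀, hd₀, hsup⟩ := Finset.exists_mem_eq_sup f.support
    (support_nonempty.mpr hf0) (fun d => mdeg d)
  have htd : f.totalDegree = mdeg d₀ := hsup
  set M₀ : Option (Fin n) →₀ ℕ := Finsupp.mapDomain some d₀ +
    Finsupp.single (none : Option (Fin n)) (f.totalDegree - d₀.sum fun _ e => e) with hM₀
  have hM₀g : M₀ ∈ g.support := by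
    rw [← hdh]
    exact mem_support_iff.mpr (by rw [hM₀, coeff_hmz hd₀]; exact mem_support_iff.mp hd₀)
  have hM₀none : M₀ none = 0 := by
    rw [hM₀]
    have : f.totalDegree - (d₀.sum fun _ e => e) = 0 := by
      have := htd; unfold mdeg at this; omega
    simp [mapDomain_some_none, this]
  by_contra hNz
  have hneq : M₀ ≠ N := fun h => hNz (h ▸ hM₀none)
  have hlt' := hN.2 M₀ hM₀g hneq
  have e1 := homog_mdeg hgq hM₀g
  have e2 := homog_mdeg hgq hN.1
  rw [mdeg_decomp] at e1 e2
  have hmdeg : mdeg (xpart N) < mdeg (xpart M₀) := by omega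
  have := hlt.2.2.2.1 _ _ hmdeg
  rcases hlt' with h | ⟨he, -⟩
  · exact hlt.2.1 _ _ this h
  · rw [he] at hmdeg; omega

end AuxLemmas

theorem stmt14 {K : Type*} [Field K] {n : ℕ}
    (lt : (Fin n →₀ ℕ) → (Fin n →₀ ℕ) → Prop) (hlt : GoodOrder lt)
    (J : Ideal (MvPolynomial (Option (Fin n)) K)) (hJ : GradedIdeal J)
    (G₁ G₂ : Set (MvPolynomial (Option (Fin n)) K))
    (hhom₁ : ∀ g ∈ G₁, ∃ p : ℕ, MvPolynomial.IsHomogeneous g p)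
    (hhom₂ : ∀ g ∈ G₂, ∃ p : ℕ, MvPolynomial.IsHomogeneous g p)
    (hmin₁ : MinGB (ltT lt) G₁ (J : Set (MvPolynomial (Option (Fin n)) K)))
    (hmin₂ : MinGB (ltT lt) G₂ (J : Set (MvPolynomial (Option (Fin n)) K)))
    (hdh₁ : ∀ F ∈ G₁, hmz (deh F) = F) :
    ∀ F ∈ G₂, hmz (deh F) = F := by
  intro F hF
  by_cases hF0 : F = 0
  · subst hF0
    have : deh (0 : MvPolynomial (Option (Fin n)) K) = 0 := map_zero _
    rw [this]
    simp [hmz]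
  obtain ⟨p, hFp⟩ := hhom₂ F hF
  have hFJ : F ∈ (J : Set (MvPolynomial (Option (Fin n)) K)) := hmin₂.1.1 hF
  obtain ⟨g, hgG, mf, mg, hmf, hmg, hdvd⟩ := hmin₁.1.2 F hFJ hF0
  obtain ⟨q, hgq⟩ := hhom₁ g hgG
  have hg0 : g ≠ 0 := by
    intro h; rw [h] at hmg; simpa using hmg.1
  have hmgz : mg none = 0 := lemB hlt hgq (hdh₁ g hgG) hmg
  have hgJ : g ∈ (J : Set (MvPolynomial (Option (Fin n)) K)) := hmin₁.1.1 hgG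
  obtain ⟨F₂, hF₂G, mg', mF₂, hmg', hmF₂, hdvd₂⟩ := hmin₂.1.2 g hgJ hg0
  have hmm : mg' = mg := isLM_unique (ltT_asymm hlt) hmg' hmg
  rw [hmm] at hdvd₂
  have hFF₂ : F₂ = F := by
    by_contra hne
    exact hmin₂.2 F₂ hF₂G F hF hne mF₂ mf hmF₂ hmf (monDvd_trans hdvd₂ hdvd)
  rw [hFF₂] at hmF₂
  have hmf₂ : mF₂ = mf := isLM_unique (ltT_asymm hlt) hmF₂ hmf
  rw [hmf₂] at hdvd₂
  have hfg : mf = mg := monDvd_antisymm hdvd₂ hdvd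
  exact lemA hFp hmf.1 (by rw [hfg]; exact hmgz)
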